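/- arXiv:1705.09147 — 6 statements merged into one kernel-verified Lean document; each statement's English description precedes it below -/
import Mathlib

section
/- For every natural number n ≥ 1, every t > 0 and x > 0, the n-th derivative of x ↦ xⁿ/(x+t) equals n!·tⁿ/(x+t)^{n+1}. -/
/-!
By the Leibniz rule, with `(y ^ n)⁽ⁱ⁾ = n! / (n - i)! · y ^ (n - i)` and
`((y + t)⁻¹)⁽ᵏ⁾ = (-1) ^ k k! / (y + t) ^ (k + 1)`, the `n`-th derivative at `x` is
`n! / (x + t) ^ (n + 1) · ∑ᵢ C(n, i) (x + t) ^ i (-x) ^ (n - i)`, and the sum is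
`((x + t) - x) ^ n = t ^ n` by the binomial theorem.
-/

open Nat Finset

theorem iteratedDeriv_inv_add_const {𝕜 : Type*} [NontriviallyNormedField 𝕜] (k : ℕ) (t x : 𝕜) :
    iteratedDeriv k (fun y => (y + t)⁻¹) x = (-1) ^ k * k ! / (x + t) ^ (k + 1) := by
  have hexp : (-1 - k : ℤ) = -(k + 1 : ℕ) := by push_cast; ring
  rw [iteratedDeriv_comp_add_const k Inv.inv t, iteratedDeriv_eq_iterate]
  beta_reduce
  rw [iter_deriv_inv, hexp, zpow_neg, zpow_natCast, div_eq_mul_inv]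

theorem iteratedDeriv_pow_div_add_const {𝕜 : Type*} [NontriviallyNormedField 𝕜] (n : ℕ)
    {t x : 𝕜} (hx : x + t ≠ 0) :
    iteratedDeriv n (fun y => y ^ n / (y + t)) x = n ! * t ^ n / (x + t) ^ (n + 1) := by
  have hmon : ContDiffAt 𝕜 n (fun y : 𝕜 => y ^ n) x := by fun_prop
  have hinv : ContDiffAt 𝕜 n (fun y => (y + t)⁻¹) x := (contDiffAt_id.add contDiffAt_const).inv hx
  calc iteratedDeriv n (fun y => y ^ n / (y + t)) x
      = ∑ i ∈ range (n + 1), n.choose i * iteratedDeriv i (· ^ n) x *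
          iteratedDeriv (n - i) (fun y => (y + t)⁻¹) x := by
        simpa only [div_eq_mul_inv] using iteratedDeriv_fun_mul hmon hinv
    _ = ∑ i ∈ range (n + 1),
          n ! * ((x + t) ^ i * (-x) ^ (n - i) * n.choose i) / (x + t) ^ (n + 1) := by
        refine sum_congr rfl fun i hi => ?_
        have hin : i ≤ n := Nat.lt_succ_iff.mp (mem_range.mp hi)
        have hfac : ((n - i)! : 𝕜) * n.descFactorial i = n ! := by
          rw [← Nat.cast_mul, factorial_mul_descFactorial hin]
        have hsplit : (x + t) ^ (n + 1) = (x + t) ^ i * (x + t) ^ (n - i + 1) := by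
          rw [← pow_add]; congr 1; omega
        rw [iteratedDeriv_pow, iteratedDeriv_inv_add_const, hsplit, ← hfac, neg_pow]
        field_simp
        ring
    _ = n ! * t ^ n / (x + t) ^ (n + 1) := by
        rw [← sum_div, ← mul_sum, ← add_pow, add_neg_cancel_comm]

theorem iteratedDeriv_xn_div_x_add_t_general
    (n : ℕ) (t : ℝ) (ht : 0 < t) (x : ℝ) (hx : 0 < x) :
    iteratedDeriv n (fun y => y ^ n / (y + t)) x =
      (n.factorial : ℝ) * t ^ n / (x + t) ^ (n + 1) :=
  iteratedDeriv_pow_div_add_const n (add_pos hx ht).ne'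

theorem iteratedDeriv_xn_div_x_add_t
    (n : ℕ) (hn : 1 ≤ n) (t : ℝ) (ht : 0 < t) (x : ℝ) (hx : 0 < x) :
    iteratedDeriv n (fun y => y ^ n / (y + t)) x =
      (n.factorial : ℝ) * t ^ n / (x + t) ^ (n + 1) :=
  iteratedDeriv_xn_div_x_add_t_general n t ht x hx
end

section
/- Let f : (0,∞) → (0,∞) be twice differentiable, strictly decreasing and convex with f' < 0 everywhere, and suppose f is (p,q)-convex, i.e. x ↦ x^{1-p} f'(x) (f(x))^{q-1} is monotone increasing. Then its inverse g is (q,p)-convex, i.e. y ↦ y^{1-q} g'(y) (g(y))^{p-1} is monotone increasing. -/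
theorem inverse_of_pq_convex_is_qp_convex
    (p q : ℝ) (f f' g g' : ℝ → ℝ)
    (hf_pos : ∀ x ∈ Set.Ioi (0:ℝ), 0 < f x)
    (hf_anti : StrictAntiOn f (Set.Ioi 0))
    (hf_conv : ConvexOn ℝ (Set.Ioi 0) f)
    (hf_deriv : ∀ x ∈ Set.Ioi (0:ℝ), HasDerivAt f (f' x) x)
    (hf_deriv2 : ∀ x ∈ Set.Ioi (0:ℝ), HasDerivAt f' (deriv f' x) x)
    (hf'_neg : ∀ x ∈ Set.Ioi (0:ℝ), f' x < 0)
    (hg_pos : ∀ y ∈ Set.Ioi (0:ℝ), 0 < g y)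
    (h_left : ∀ x ∈ Set.Ioi (0:ℝ), g (f x) = x)
    (h_right : ∀ y ∈ Set.Ioi (0:ℝ), f (g y) = y)
    (hg_deriv : ∀ y ∈ Set.Ioi (0:ℝ), HasDerivAt g (g' y) y)
    (hpq : MonotoneOn (fun x => x ^ (1 - p) * f' x * f x ^ (q - 1)) (Set.Ioi 0)) :
    MonotoneOn (fun y => y ^ (1 - q) * g' y * g y ^ (p - 1)) (Set.Ioi 0) := by
  have key : ∀ y ∈ Set.Ioi (0:ℝ), f' (g y) * g' y = 1 := by
    intro y hy
    have hgy := hg_pos y hy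
    have hcomp := (hf_deriv (g y) hgy).comp y (hg_deriv y hy)
    have hid : HasDerivAt (fun z : ℝ => z) (1:ℝ) y := hasDerivAt_id y
    have heq : (fun z => f (g z)) =ᶠ[nhds y] (fun z : ℝ => z) := by
      filter_upwards [isOpen_Ioi.mem_nhds hy] with z hz
      exact h_right z hz
    exact hcomp.unique (hid.congr_of_eventuallyEq heq)
  have hFneg : ∀ x ∈ Set.Ioi (0:ℝ), x ^ (1-p) * f' x * f x ^ (q-1) < 0 := by
    intro x hx
    have h1 : (0:ℝ) < x ^ (1-p) := Real.rpow_pos_of_pos hx _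
    have h2 : (0:ℝ) < f x ^ (q-1) := Real.rpow_pos_of_pos (hf_pos x hx) _
    exact mul_neg_of_neg_of_pos (mul_neg_of_pos_of_neg h1 (hf'_neg x hx)) h2
  have hG : ∀ y ∈ Set.Ioi (0:ℝ),
      y ^ (1 - q) * g' y * g y ^ (p - 1)
        = ((g y) ^ (1-p) * f' (g y) * f (g y) ^ (q-1))⁻¹ := by
    intro y hy
    have hgy := hg_pos y hy
    have hy' : f (g y) = y := h_right y hy
    have hf'ne : f' (g y) ≠ 0 := ne_of_lt (hf'_neg _ hgy)
    have hg' : g' y = (f' (g y))⁻¹ := by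
      field_simp
      linarith [key y hy]
    rw [mul_inv, mul_inv, ← Real.rpow_neg hgy.le, ← Real.rpow_neg (hf_pos _ hgy).le, hy', hg']
    ring_nf
  intro y₁ hy₁ y₂ hy₂ hle
  have hx₁ : 0 < g y₁ := hg_pos y₁ hy₁
  have hx₂ : 0 < g y₂ := hg_pos y₂ hy₂
  have hfx₁ : f (g y₁) = y₁ := h_right y₁ hy₁
  have hfx₂ : f (g y₂) = y₂ := h_right y₂ hy₂
  have hxle : g y₂ ≤ g y₁ := by
    by_contra h
    push_neg at h
    have := hf_anti hx₁ hx₂ h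
    rw [hfx₁, hfx₂] at this
    linarith
  have hF := hpq hx₂ hx₁ hxle
  simp only at hF ⊢
  rw [hG y₁ hy₁, hG y₂ hy₂]
  have h1 := hFneg (g y₁) hx₁
  have h2 := hFneg (g y₂) hx₂
  have hne1 : (g y₁) ^ (1-p) * f' (g y₁) * f (g y₁) ^ (q-1) ≠ 0 := ne_of_lt h1
  have hne2 : (g y₂) ^ (1-p) * f' (g y₂) * f (g y₂) ^ (q-1) ≠ 0 := ne_of_lt h2
  rw [inv_le_inv_of_neg h1 h2]
  exact hF
end

section
/- The function φ₁(z) = arctan(1/z)/z is completely monotone on (0,∞): it admits the Laplace-transform representation φ₁(z) = ∫₀^∞ e^{-zt} Si(t) dt where Si(t) = ∫₀^t (sin τ)/τ dτ ≥ 0 for t ≥ 0, hence (-1)ⁿ φ₁⁽ⁿ⁾(z) ≥ 0 for all n ≥ 0 and z > 0. -/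
/-!
Integrating by parts against `1 - cos`,
`Si t = (1 - cos t) / t + ∫₀ᵗ (1 - cos τ) / τ² dτ`, a sum of two nonnegative terms.

The substitution `τ = t u` gives `Si t = ∫₀¹ sin (u t) / u du`, so a single use of Fubini and
`∫₀^∞ e^{-zt} sin (u t) dt = u / (z² + u²)` turn the Laplace transform of `Si` into
`∫₀¹ du / (z² + u²) = arctan (1 / z) / z`.

Since `|Si t| ≤ t`, the Laplace transform may be differentiated under the integral sign any number
of times, so `(-1)ⁿ φ₁⁽ⁿ⁾(z) = ∫₀^∞ tⁿ e^{-zt} Si t dt ≥ 0`.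
-/

open MeasureTheory

noncomputable def Si (t : ℝ) : ℝ := ∫ τ in (0:ℝ)..t, Real.sin τ / τ

noncomputable def phi₁ (z : ℝ) : ℝ := Real.arctan (1 / z) / z

open Real Set Filter Topology

noncomputable def laplaceTransform (f : ℝ → ℝ) (z : ℝ) : ℝ :=
  ∫ t in Ioi 0, exp (-z * t) * f t

theorem integrableOn_pow_mul_exp_neg_mul (k : ℕ) {c : ℝ} (hc : 0 < c) :
    IntegrableOn (fun t => t ^ k * exp (-c * t)) (Ioi 0) := by
  refine (integrableOn_rpow_mul_exp_neg_mul_rpow (s := k) (p := 1)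
    (by linarith [k.cast_nonneg (α := ℝ)]) one_pos hc).congr_fun (fun t _ => ?_)
    measurableSet_Ioi
  simp

section PolynomialGrowth

variable {f : ℝ → ℝ} {C : ℝ} {m : ℕ}

theorem integrableOn_exp_neg_mul_mul (hf : AEStronglyMeasurable f (volume.restrict (Ioi 0)))
    (hbound : ∀ t > 0, |f t| ≤ C * t ^ m) {z : ℝ} (hz : 0 < z) :
    IntegrableOn (fun t => exp (-z * t) * f t) (Ioi 0) := by
  refine ((integrableOn_pow_mul_exp_neg_mul m hz).const_mul C).mono'
    ((continuous_exp.comp (continuous_const.mul continuous_id)).aestronglyMeasurable.mul hf) ?_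
  filter_upwards [ae_restrict_mem measurableSet_Ioi] with t ht
  rw [norm_mul, norm_of_nonneg (exp_pos _).le, norm_eq_abs]
  nlinarith [hbound t ht, exp_pos (-z * t)]

theorem aestronglyMeasurable_neg_pow_mul (hf : AEStronglyMeasurable f (volume.restrict (Ioi 0)))
    (n : ℕ) : AEStronglyMeasurable (fun t => (-t) ^ n * f t) (volume.restrict (Ioi 0)) :=
  (continuous_neg.pow n).aestronglyMeasurable.mul hf

theorem abs_neg_pow_mul_le (hbound : ∀ t > 0, |f t| ≤ C * t ^ m) (n : ℕ) :
    ∀ t > 0, |(-t) ^ n * f t| ≤ C * t ^ (m + n) := fun t ht => by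
  rw [abs_mul, abs_pow, abs_neg, abs_of_pos ht, pow_add]
  nlinarith [hbound t ht, pow_pos ht n]

theorem hasDerivAt_laplaceTransform (hf : AEStronglyMeasurable f (volume.restrict (Ioi 0)))
    (hbound : ∀ t > 0, |f t| ≤ C * t ^ m) {z : ℝ} (hz : 0 < z) :
    HasDerivAt (laplaceTransform f) (laplaceTransform (fun t => -t * f t) z) z := by
  have hf' : ∀ t > 0, |-t * f t| ≤ C * t ^ (m + 1) := by
    simpa using abs_neg_pow_mul_le hbound 1
  refine (hasDerivAt_integral_of_dominated_loc_of_deriv_le (μ := volume.restrict (Ioi 0))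
    (F := fun y t => exp (-y * t) * f t) (F' := fun y t => exp (-y * t) * (-t * f t))
    (Ioo_mem_nhds (half_lt_self hz) (lt_two_mul_self hz))
    (bound := fun t => C * (t ^ (m + 1) * exp (-(z / 2) * t))) ?_
    (integrableOn_exp_neg_mul_mul hf hbound hz) ?_ ?_ ?_ ?_).2
  · filter_upwards [Ioi_mem_nhds hz] with y hy
    exact (integrableOn_exp_neg_mul_mul hf hbound hy).aestronglyMeasurable
  · exact (integrableOn_exp_neg_mul_mul (continuous_neg.aestronglyMeasurable.mul hf) hf'
      hz).aestronglyMeasurable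
  · filter_upwards [ae_restrict_mem measurableSet_Ioi] with t ht y hy
    rw [norm_mul, norm_of_nonneg (exp_pos _).le, norm_eq_abs]
    have : exp (-y * t) ≤ exp (-(z / 2) * t) := exp_le_exp.2 (by nlinarith [hy.1, mem_Ioi.1 ht])
    nlinarith [hf' t ht, abs_nonneg (-t * f t), exp_pos (-y * t)]
  · exact (integrableOn_pow_mul_exp_neg_mul (m + 1) (half_pos hz)).const_mul C
  · filter_upwards with t y _
    exact ((hasDerivAt_id' y).neg.mul_const t).exp.mul_const (f t) |>.congr_deriv
      (by simp only [Pi.neg_apply]; ring)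

theorem iteratedDeriv_laplaceTransform (hf : AEStronglyMeasurable f (volume.restrict (Ioi 0)))
    (hbound : ∀ t > 0, |f t| ≤ C * t ^ m) (n : ℕ) {z : ℝ} (hz : 0 < z) :
    iteratedDeriv n (laplaceTransform f) z = laplaceTransform (fun t => (-t) ^ n * f t) z := by
  induction n generalizing z with
  | zero => simp
  | succ n ih =>
    have hderiv := hasDerivAt_laplaceTransform (aestronglyMeasurable_neg_pow_mul hf n)
      (abs_neg_pow_mul_le hbound n) hz
    have heq : iteratedDeriv n (laplaceTransform f) =ᶠ[𝓝 z]
        laplaceTransform (fun t => (-t) ^ n * f t) := by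
      filter_upwards [Ioi_mem_nhds hz] with y hy using ih hy
    rw [iteratedDeriv_succ, heq.deriv_eq, hderiv.deriv]
    simp only [pow_succ, mul_assoc, mul_comm (-_ : ℝ)]

theorem neg_one_pow_mul_iteratedDeriv_laplaceTransform_nonneg
    (hf : AEStronglyMeasurable f (volume.restrict (Ioi 0)))
    (hbound : ∀ t > 0, |f t| ≤ C * t ^ m) (hpos : ∀ t > 0, 0 ≤ f t) (n : ℕ) {z : ℝ}
    (hz : 0 < z) : 0 ≤ (-1) ^ n * iteratedDeriv n (laplaceTransform f) z := by
  rw [iteratedDeriv_laplaceTransform hf hbound n hz, laplaceTransform, ← integral_const_mul]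
  refine setIntegral_nonneg measurableSet_Ioi fun t ht => ?_
  have hsq : (-1 : ℝ) ^ n * (-1) ^ n = 1 := by rw [← mul_pow]; norm_num
  have key : (-1) ^ n * (exp (-z * t) * ((-t) ^ n * f t)) = exp (-z * t) * (t ^ n * f t) := by
    linear_combination (exp (-z * t) * t ^ n * f t) * hsq
  have := hpos t ht
  have := pow_pos (mem_Ioi.1 ht) n
  rw [key]
  positivity

end PolynomialGrowth

theorem integral_exp_neg_mul_mul_sin {z : ℝ} (hz : 0 < z) (u : ℝ) :
    ∫ t in Ioi 0, exp (-z * t) * sin (u * t) = u / (z ^ 2 + u ^ 2) := by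
  have ha : (-z + u * Complex.I).re < 0 := by simpa using hz
  have h := congrArg Complex.im (integral_exp_mul_complex_Ioi ha 0)
  rw [← RCLike.im_to_complex, ← integral_im (integrableOn_exp_mul_complex_Ioi ha 0)] at h
  convert h using 1
  · refine setIntegral_congr_fun measurableSet_Ioi fun t _ => ?_
    simp [Complex.exp_im]
  · simp [Complex.div_im, Complex.normSq_apply]
    field_simp

theorem integral_one_div_sq_add_sq {z : ℝ} (hz : 0 < z) :
    ∫ u in 0..1, 1 / (z ^ 2 + u ^ 2) = arctan (1 / z) / z := by
  have h : ∀ u ∈ uIcc (0 : ℝ) 1,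
      HasDerivAt (fun u => arctan (u / z) / z) (1 / (z ^ 2 + u ^ 2)) u := fun u _ => by
    have := ((hasDerivAt_arctan (u / z)).comp u ((hasDerivAt_id' u).div_const z)).div_const z
    exact this.congr_deriv (by field_simp)
  rw [intervalIntegral.integral_eq_sub_of_hasDerivAt h
    ((continuous_const.div (by fun_prop) fun u => by positivity).intervalIntegrable 0 1)]
  simp

theorem one_sub_cos_eq_two_mul_sin_sq (x : ℝ) : 1 - cos x = 2 * sin (x / 2) ^ 2 := by
  have := cos_two_mul (x / 2)
  rw [mul_div_cancel₀ x two_ne_zero] at this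
  linarith [sin_sq_add_cos_sq (x / 2)]

theorem one_sub_cos_div_eq_sin_mul_sinc (x : ℝ) :
    (1 - cos x) / x = sin (x / 2) * sinc (x / 2) := by
  rcases eq_or_ne x 0 with rfl | hx
  · simp
  rw [sinc_of_ne_zero (by positivity), one_sub_cos_eq_two_mul_sin_sq]
  field_simp

theorem one_sub_cos_div_sq_eq_sinc_sq {x : ℝ} (hx : x ≠ 0) :
    (1 - cos x) / x ^ 2 = sinc (x / 2) ^ 2 / 2 := by
  rw [sinc_of_ne_zero (by positivity), one_sub_cos_eq_two_mul_sin_sq]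
  field_simp

theorem hasDerivAt_one_sub_cos_div {x : ℝ} (hx : x ≠ 0) :
    HasDerivAt (fun x => (1 - cos x) / x) (sinc x - sinc (x / 2) ^ 2 / 2) x := by
  rw [sinc_of_ne_zero hx, ← one_sub_cos_div_sq_eq_sinc_sq hx]
  refine (((hasDerivAt_const x (1 : ℝ)).sub (hasDerivAt_cos x)).div (hasDerivAt_id' x)
    hx).congr_deriv ?_
  simp only [Pi.sub_apply]
  field_simp
  ring

theorem Si_eq_integral_sinc (t : ℝ) : Si t = ∫ τ in 0..t, sinc τ :=
  intervalIntegral.integral_congr_ae <|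
    ((countable_singleton 0).ae_notMem volume).mono fun _ hτ _ => (sinc_of_ne_zero hτ).symm

theorem continuous_Si : Continuous Si := by
  rw [funext Si_eq_integral_sinc]
  exact continuous_iff_continuousAt.2 fun t =>
    (continuous_sinc.integral_hasStrictDerivAt 0 t).hasDerivAt.continuousAt

theorem abs_Si_le (t : ℝ) : |Si t| ≤ |t| := by
  simpa [Si_eq_integral_sinc] using intervalIntegral.norm_integral_le_of_norm_le_const
    (a := 0) (b := t) fun τ _ => (norm_eq_abs (sinc τ)).trans_le (abs_sinc_le_one τ)

theorem Si_eq_one_sub_cos_div_add_integral {t : ℝ} (ht : 0 ≤ t) :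
    Si t = (1 - cos t) / t + ∫ τ in 0..t, sinc (τ / 2) ^ 2 / 2 := by
  have hk : Continuous fun τ => sinc (τ / 2) ^ 2 / 2 := by
    have := continuous_sinc
    fun_prop
  have hG : ∀ x ≠ 0, HasDerivAt
      (fun x => (1 - cos x) / x + ∫ τ in 0..x, sinc (τ / 2) ^ 2 / 2) (sinc x) x := fun x hx =>
    (hasDerivAt_one_sub_cos_div hx).add (hk.integral_hasStrictDerivAt 0 x).hasDerivAt
      |>.congr_deriv (by ring)
  rw [Si_eq_integral_sinc, intervalIntegral.integral_eq_sub_of_hasDerivAt_of_le ht _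
    (fun x hx => hG x hx.1.ne') (continuous_sinc.intervalIntegrable 0 t)]
  · simp
  · simp_rw [one_sub_cos_div_eq_sin_mul_sinc]
    have := continuous_sinc
    exact (Continuous.add (by fun_prop) (continuous_iff_continuousAt.2 fun x =>
      (hk.integral_hasStrictDerivAt 0 x).hasDerivAt.continuousAt)).continuousOn

theorem Si_nonneg {t : ℝ} (ht : 0 ≤ t) : 0 ≤ Si t := by
  rw [Si_eq_one_sub_cos_div_add_integral ht]
  have := cos_le_one t
  exact add_nonneg (by positivity) (intervalIntegral.integral_nonneg ht fun τ _ => by positivity)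

theorem Si_eq_integral_mul_sinc_mul (t : ℝ) : Si t = ∫ u in 0..1, t * sinc (t * u) := by
  rcases eq_or_ne t 0 with rfl | ht
  · simp [Si]
  rw [intervalIntegral.integral_const_mul, intervalIntegral.integral_comp_mul_left sinc ht,
    Si_eq_integral_sinc, smul_eq_mul, mul_zero, mul_one, mul_inv_cancel_left₀ ht]

theorem laplaceTransform_Si {z : ℝ} (hz : 0 < z) :
    laplaceTransform Si z = arctan (1 / z) / z := by
  set F : ℝ → ℝ → ℝ := fun t u => exp (-z * t) * (t * sinc (t * u))
  have hF : Integrable (Function.uncurry F)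
      ((volume.restrict (Ioi 0)).prod (volume.restrict (Ioc 0 1))) := by
    refine ((integrableOn_pow_mul_exp_neg_mul 1 hz).mul_prod (integrable_const (1 : ℝ))).mono'
      ?_ ?_
    · have := continuous_sinc
      exact Continuous.aestronglyMeasurable (by fun_prop)
    · rw [Measure.prod_restrict]
      filter_upwards [ae_restrict_mem (measurableSet_Ioi.prod measurableSet_Ioc)] with p hp
      have ht : 0 < p.1 := hp.1
      simp only [Function.uncurry, F, norm_mul, norm_of_nonneg (exp_pos _).le,
        norm_of_nonneg ht.le, pow_one, mul_one]
      calc exp (-z * p.1) * (p.1 * ‖sinc (p.1 * p.2)‖) ≤ exp (-z * p.1) * (p.1 * 1) := by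
            gcongr; exact abs_sinc_le_one _
        _ = p.1 * exp (-z * p.1) := by ring
  have hinner : ∀ u ∈ Ioc (0 : ℝ) 1, ∫ t in Ioi 0, F t u = 1 / (z ^ 2 + u ^ 2) := by
    intro u hu
    calc ∫ t in Ioi 0, F t u = ∫ t in Ioi 0, exp (-z * t) * sin (u * t) / u := by
          refine setIntegral_congr_fun measurableSet_Ioi fun t ht => ?_
          simp only [F]
          rw [sinc_of_ne_zero (mul_pos ht hu.1).ne', mul_comm u t, ← mul_div_assoc,
            mul_div_mul_left _ _ (ne_of_gt ht), mul_div_assoc]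
      _ = 1 / (z ^ 2 + u ^ 2) := by
          rw [integral_div, integral_exp_neg_mul_mul_sin hz, div_right_comm, div_self hu.1.ne']
  calc laplaceTransform Si z = ∫ t in Ioi 0, ∫ u in Ioc 0 1, F t u := by
        refine setIntegral_congr_fun measurableSet_Ioi fun t _ => ?_
        rw [Si_eq_integral_mul_sinc_mul, intervalIntegral.integral_of_le zero_le_one,
          ← integral_const_mul]
    _ = ∫ u in Ioc 0 1, ∫ t in Ioi 0, F t u := integral_integral_swap hF
    _ = ∫ u in Ioc 0 1, 1 / (z ^ 2 + u ^ 2) := setIntegral_congr_fun measurableSet_Ioc hinner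
    _ = arctan (1 / z) / z := by
        rw [← intervalIntegral.integral_of_le zero_le_one, integral_one_div_sq_add_sq hz]

theorem phi₁_completely_monotone :
    (∀ t : ℝ, 0 ≤ t → 0 ≤ Si t) ∧
    (∀ z : ℝ, 0 < z → phi₁ z = ∫ t in Set.Ioi (0:ℝ), Real.exp (-z * t) * Si t) ∧
    (∀ n : ℕ, ∀ z : ℝ, 0 < z → 0 ≤ (-1 : ℝ) ^ n * iteratedDeriv n phi₁ z) := by
  have hphi : ∀ z > 0, phi₁ z = laplaceTransform Si z := fun z hz =>
    (laplaceTransform_Si hz).symm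
  have hSi : ∀ t > 0, |Si t| ≤ 1 * t ^ 1 := fun t ht => by
    simpa [abs_of_pos ht] using abs_Si_le t
  refine ⟨fun _ => Si_nonneg, hphi, fun n z hz => ?_⟩
  have heq : phi₁ =ᶠ[𝓝 z] laplaceTransform Si := by
    filter_upwards [Ioi_mem_nhds hz] with y hy using hphi y hy
  rw [heq.iteratedDeriv_eq n]
  exact neg_one_pow_mul_iteratedDeriv_laplaceTransform_nonneg
    continuous_Si.aestronglyMeasurable hSi (fun t ht => Si_nonneg ht.le) n hz
end

section
/- For all x > 0, 3/(1+3x) < arctan(1/√x)/√x < 1/x, i.e. the function φ₂(x) = arctan(1/√x)/√x lies strictly between 3/(1+3x) and 1/x. -/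
/-!
Substituting `t = 1 / √x` turns `φ₂(x)` into `t · arctan t`, `1 / x` into `t · t` and
`3 / (1 + 3x)` into `t · 3t / (3 + t²)`, so the claim is `3t / (3 + t²) < arctan t < t`
for `t > 0`. The upper bound is `arctan t < tan (arctan t)`. For the lower bound both sides
vanish at `0` and the derivative of the difference is
`1 / (1 + t²) - (9 - 3t²) / (3 + t²)² = 4t⁴ / ((1 + t²)(3 + t²)²) > 0`.
-/

open Real Set

namespace Real

theorem arctan_lt_self {t : ℝ} (ht : 0 < t) : arctan t < t := by
  simpa only [tan_arctan] using lt_tan (arctan_pos.mpr ht) (arctan_lt_pi_div_two t)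

theorem hasDerivAt_arctan_sub_three_mul_div (t : ℝ) :
    HasDerivAt (fun t => arctan t - 3 * t / (3 + t ^ 2))
      (4 * t ^ 4 / ((1 + t ^ 2) * (3 + t ^ 2) ^ 2)) t := by
  have hden : 3 + t ^ 2 ≠ 0 := by positivity
  have hquot : HasDerivAt (fun t => 3 * t / (3 + t ^ 2))
      ((3 * (3 + t ^ 2) - 3 * t * (2 * t)) / (3 + t ^ 2) ^ 2) t := by
    have hnum : HasDerivAt (fun t : ℝ => 3 * t) 3 t := by
      simpa using (hasDerivAt_id t).const_mul 3
    have hpoly : HasDerivAt (fun t : ℝ => 3 + t ^ 2) (2 * t) t := by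
      simpa using (hasDerivAt_pow 2 t).const_add 3
    exact hnum.div hpoly hden
  refine ((hasDerivAt_arctan t).sub hquot).congr_deriv ?_
  field_simp
  ring

theorem three_mul_div_lt_arctan {t : ℝ} (ht : 0 < t) : 3 * t / (3 + t ^ 2) < arctan t := by
  have hmono : StrictMonoOn (fun t => arctan t - 3 * t / (3 + t ^ 2)) (Ici 0) := by
    refine strictMonoOn_of_deriv_pos (convex_Ici 0) ?_ fun y hy => ?_
    · exact fun y _ => (hasDerivAt_arctan_sub_three_mul_div y).continuousAt.continuousWithinAt
    · rw [interior_Ici] at hy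
      have hy : 0 < y := hy
      rw [(hasDerivAt_arctan_sub_three_mul_div y).deriv]
      positivity
  simpa using hmono self_mem_Ici ht.le ht

end Real

theorem phi₂_between_bounds (x : ℝ) (hx : 0 < x) :
    3 / (1 + 3 * x) < Real.arctan (1 / Real.sqrt x) / Real.sqrt x ∧
      Real.arctan (1 / Real.sqrt x) / Real.sqrt x < 1 / x := by
  have hs : 0 < √x := sqrt_pos.mpr hx
  set t := 1 / √x with ht_def
  have ht : 0 < t := by positivity
  have hphi : arctan t / √x = t * arctan t := by rw [ht_def]; ring
  have hinv : 1 / x = t * t := by rw [ht_def, one_div_mul_one_div, mul_self_sqrt hx.le]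
  have hlower : 3 / (1 + 3 * x) = t * (3 * t / (3 + t ^ 2)) := by
    rw [ht_def]
    field_simp
    rw [sq_sqrt hx.le]
    ring
  rw [hphi, hinv, hlower]
  exact ⟨mul_lt_mul_of_pos_left (three_mul_div_lt_arctan ht) ht,
    mul_lt_mul_of_pos_left (arctan_lt_self ht) ht⟩
end

section
/- The function φ₂(x) = arctan(1/√x)/√x is GA-convex on (0,∞): for all x₀, x₁ > 0, φ₂(√(x₀x₁)) ≤ (φ₂(x₀) + φ₂(x₁))/2. -/
/-!
Substituting `t = 1 / √x` turns `φ₂(x)` into `g t = t * arctan t` and the geometric mean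
`√(x₀ x₁)` into the geometric mean of the `t`'s. Since `g'' t = 2 / (1 + t²)² ≥ 0`, `g` is convex,
and it is monotone on `[0, ∞)`; so `g √(ab) ≤ g ((a + b) / 2) ≤ (g a + g b) / 2` by AM-GM and
midpoint convexity.
-/

open Real Set

lemma hasDerivAt_mul_arctan (t : ℝ) :
    HasDerivAt (fun t => t * arctan t) (arctan t + t / (1 + t ^ 2)) t := by
  refine ((hasDerivAt_id' t).fun_mul (hasDerivAt_arctan t)).congr_deriv ?_
  ring

lemma hasDerivAt_arctan_add_div (t : ℝ) :
    HasDerivAt (fun t => arctan t + t / (1 + t ^ 2)) (2 / (1 + t ^ 2) ^ 2) t := by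
  have hpos : 0 < 1 + t ^ 2 := by positivity
  refine ((hasDerivAt_arctan t).fun_add
    ((hasDerivAt_id' t).fun_div ((hasDerivAt_pow 2 t).const_add 1) hpos.ne')).congr_deriv ?_
  field_simp
  ring

lemma convexOn_mul_arctan : ConvexOn ℝ univ fun t => t * arctan t :=
  convexOn_of_hasDerivWithinAt2_nonneg convex_univ
    (fun t _ => (hasDerivAt_mul_arctan t).continuousAt.continuousWithinAt)
    (fun t _ => (hasDerivAt_mul_arctan t).hasDerivWithinAt)
    (fun t _ => (hasDerivAt_arctan_add_div t).hasDerivWithinAt)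
    (fun t _ => by positivity)

lemma monotoneOn_mul_arctan : MonotoneOn (fun t => t * arctan t) (Ici 0) :=
  fun _ ha _ _ hab =>
    mul_le_mul hab (arctan_strictMono.monotone hab) (arctan_nonneg.2 ha) (ha.trans hab)

lemma Real.sqrt_mul_le_half_add {a b : ℝ} (ha : 0 ≤ a) (hb : 0 ≤ b) :
    √(a * b) ≤ (a + b) / 2 := by
  rw [sqrt_le_left (by positivity)]
  nlinarith [sq_nonneg (a - b)]

lemma ConvexOn.map_sqrt_mul_le_of_monotoneOn {f : ℝ → ℝ} (hconv : ConvexOn ℝ (Ici 0) f)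
    (hmono : MonotoneOn f (Ici 0)) {a b : ℝ} (ha : 0 ≤ a) (hb : 0 ≤ b) :
    f √(a * b) ≤ (f a + f b) / 2 := by
  have hmid := hconv.2 (mem_Ici.2 ha) (mem_Ici.2 hb) (by norm_num : (0 : ℝ) ≤ 1 / 2)
    (by norm_num : (0 : ℝ) ≤ 1 / 2) (by norm_num)
  simp only [smul_eq_mul] at hmid
  calc f √(a * b) ≤ f ((a + b) / 2) :=
        hmono (sqrt_nonneg _) (mem_Ici.2 (by positivity)) (sqrt_mul_le_half_add ha hb)
    _ = f (1 / 2 * a + 1 / 2 * b) := by ring_nf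
    _ ≤ 1 / 2 * f a + 1 / 2 * f b := hmid
    _ = (f a + f b) / 2 := by ring

lemma arctan_one_div_div_self (s : ℝ) : arctan (1 / s) / s = 1 / s * arctan (1 / s) := by
  rw [div_eq_mul_inv, one_div, mul_comm]

lemma one_div_sqrt_sqrt_mul {x y : ℝ} (hx : 0 ≤ x) :
    1 / √√(x * y) = √(1 / √x * (1 / √y)) := by
  rw [div_mul_div_comm, one_mul, sqrt_mul hx, sqrt_div' 1 (by positivity), sqrt_one]

theorem phi₂_GA_convex_general (x₀ x₁ : ℝ) (h₀ : 0 < x₀) :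
    Real.arctan (1 / Real.sqrt (Real.sqrt (x₀ * x₁))) / Real.sqrt (Real.sqrt (x₀ * x₁)) ≤
      (Real.arctan (1 / Real.sqrt x₀) / Real.sqrt x₀ +
        Real.arctan (1 / Real.sqrt x₁) / Real.sqrt x₁) / 2 := by
  simp only [arctan_one_div_div_self]
  rw [one_div_sqrt_sqrt_mul h₀.le]
  exact (convexOn_mul_arctan.subset (subset_univ _) (convex_Ici 0)).map_sqrt_mul_le_of_monotoneOn
    monotoneOn_mul_arctan (by positivity) (by positivity)

theorem phi₂_GA_convex (x₀ x₁ : ℝ) (h₀ : 0 < x₀) (h₁ : 0 < x₁) :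
    Real.arctan (1 / Real.sqrt (Real.sqrt (x₀ * x₁))) / Real.sqrt (Real.sqrt (x₀ * x₁)) ≤
      (Real.arctan (1 / Real.sqrt x₀) / Real.sqrt x₀ +
        Real.arctan (1 / Real.sqrt x₁) / Real.sqrt x₁) / 2 :=
  phi₂_GA_convex_general x₀ x₁ h₀
end

section
/- Let f and g be positive, twice continuously differentiable functions on a convex open set D ⊆ ℝᴺ, and let −1 < α < 0. If f^α and g^α are both concave on D, then (f+g)^α is concave on D. -/
/-!
With `p = α⁻¹ < 0` and `u = f ^ α`, `v = g ^ α` one has `(f + g) ^ α = (u ^ p + v ^ p) ^ p⁻¹`.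
The map `(u, v) ↦ (u ^ p + v ^ p) ^ p⁻¹` is positively homogeneous and, for `p < 0`, superadditive
on the open quadrant (reverse Minkowski inequality, from the convexity of `t ↦ t ^ p`), hence
concave; it is also monotone. A monotone concave function of concave functions is concave.
-/

open Real Set

lemma convexOn_rpow_of_nonpos {p : ℝ} (hp : p ≤ 0) : ConvexOn ℝ (Ioi 0) fun x : ℝ => x ^ p := by
  refine ⟨convex_Ioi 0, fun x hx y hy a b ha hb hab => ?_⟩
  have hxy : 0 < a • x + b • y := (convex_Ioi 0) hx hy ha hb hab
  have hlog : a • log x + b • log y ≤ log (a • x + b • y) :=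
    strictConcaveOn_log_Ioi.concaveOn.2 hx hy ha hb hab
  calc (a • x + b • y) ^ p = exp (log (a • x + b • y) * p) := rpow_def_of_pos hxy p
    _ ≤ exp (a • (log x * p) + b • (log y * p)) := by
      simp only [smul_eq_mul] at hlog ⊢
      exact exp_le_exp.2 (by nlinarith)
    _ ≤ a • exp (log x * p) + b • exp (log y * p) := convexOn_exp.2 trivial trivial ha hb hab
    _ = a • x ^ p + b • y ^ p := by rw [rpow_def_of_pos hx, rpow_def_of_pos hy]

lemma add_rpow_le_of_add_eq_one {p u v a b : ℝ} (hp : p ≤ 0) (hu : 0 < u) (hv : 0 < v)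
    (ha : 0 < a) (hb : 0 < b) (hab : a + b = 1) :
    (u + v) ^ p ≤ a ^ (1 - p) * u ^ p + b ^ (1 - p) * v ^ p := by
  have key := (convexOn_rpow_of_nonpos hp).2 (div_pos hu ha) (div_pos hv hb) ha.le hb.le hab
  have weight {c w : ℝ} (hc : 0 < c) (hw : 0 < w) : c * (w / c) ^ p = c ^ (1 - p) * w ^ p := by
    rw [div_rpow hw.le hc.le, rpow_sub hc, rpow_one]
    field_simp
  simp only [smul_eq_mul, weight ha hu, weight hb hv] at key
  rwa [mul_div_cancel₀ u ha.ne', mul_div_cancel₀ v hb.ne'] at key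

section Composition

variable {𝕜 E β γ δ : Type*} [Semiring 𝕜] [PartialOrder 𝕜] [AddCommMonoid E] [SMul 𝕜 E]
  [AddCommMonoid β] [PartialOrder β] [SMul 𝕜 β] [AddCommMonoid γ] [PartialOrder γ] [SMul 𝕜 γ]
  [AddCommMonoid δ] [PartialOrder δ] [SMul 𝕜 δ] {s : Set E}

theorem ConcaveOn.prodMk {f : E → β} {g : E → γ} (hf : ConcaveOn 𝕜 s f) (hg : ConcaveOn 𝕜 s g) :
    ConcaveOn 𝕜 s fun x => (f x, g x) :=
  ⟨hf.1, fun _ hx _ hy _ _ ha hb hab => ⟨hf.2 hx hy ha hb hab, hg.2 hx hy ha hb hab⟩⟩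

theorem ConcaveOn.comp_of_mapsTo {t : Set β} {f : E → β} {g : β → δ} (hg : ConcaveOn 𝕜 t g)
    (hf : ConcaveOn 𝕜 s f) (hg_mono : MonotoneOn g t) (hst : MapsTo f s t) :
    ConcaveOn 𝕜 s (g ∘ f) :=
  ⟨hf.1, fun _ hx _ hy _ _ ha hb hab =>
    (hg.2 (hst hx) (hst hy) ha hb hab).trans <|
      hg_mono (hg.1 (hst hx) (hst hy) ha hb hab) (hst (hf.1 hx hy ha hb hab))
        (hf.2 hx hy ha hb hab)⟩

end Composition

noncomputable def lpNormPair (p : ℝ) (w : ℝ × ℝ) : ℝ := (w.1 ^ p + w.2 ^ p) ^ p⁻¹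

section lpNormPair

variable {p : ℝ} {w z : ℝ × ℝ}

lemma rpow_add_rpow_pos (hw : w ∈ Ioi 0 ×ˢ Ioi 0) : 0 < w.1 ^ p + w.2 ^ p :=
  add_pos (rpow_pos_of_pos hw.1 p) (rpow_pos_of_pos hw.2 p)

lemma lpNormPair_pos (hw : w ∈ Ioi 0 ×ˢ Ioi 0) : 0 < lpNormPair p w :=
  rpow_pos_of_pos (rpow_add_rpow_pos hw) _

lemma lpNormPair_rpow (hp : p ≠ 0) (hw : w ∈ Ioi 0 ×ˢ Ioi 0) :
    lpNormPair p w ^ p = w.1 ^ p + w.2 ^ p :=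
  rpow_inv_rpow (rpow_add_rpow_pos hw).le hp

lemma lpNormPair_smul (hp : p ≠ 0) {c : ℝ} (hc : 0 < c) (hw : w ∈ Ioi 0 ×ˢ Ioi 0) :
    lpNormPair p (c • w) = c * lpNormPair p w := by
  simp only [lpNormPair, Prod.smul_fst, Prod.smul_snd, smul_eq_mul]
  rw [mul_rpow hc.le hw.1.le, mul_rpow hc.le hw.2.le, ← mul_add,
    mul_rpow (rpow_pos_of_pos hc p).le (rpow_add_rpow_pos hw).le, rpow_rpow_inv hc.le hp]

lemma monotoneOn_lpNormPair (hp : p ≤ 0) : MonotoneOn (lpNormPair p) (Ioi 0 ×ˢ Ioi 0) := by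
  intro w hw z hz hwz
  have hsum : z.1 ^ p + z.2 ^ p ≤ w.1 ^ p + w.2 ^ p :=
    add_le_add (rpow_le_rpow_of_nonpos hw.1 hwz.1 hp) (rpow_le_rpow_of_nonpos hw.2 hwz.2 hp)
  exact rpow_le_rpow_of_nonpos (rpow_add_rpow_pos hz) hsum (inv_nonpos.2 hp)

lemma add_le_lpNormPair_add (hp : p < 0) (hw : w ∈ Ioi 0 ×ˢ Ioi 0) (hz : z ∈ Ioi 0 ×ˢ Ioi 0) :
    lpNormPair p w + lpNormPair p z ≤ lpNormPair p (w + z) := by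
  set A := lpNormPair p w
  set C := lpNormPair p z
  have hA : 0 < A := lpNormPair_pos hw
  have hC : 0 < C := lpNormPair_pos hz
  have hS : 0 < A + C := add_pos hA hC
  have hwz : w + z ∈ Ioi 0 ×ˢ Ioi 0 :=
    ⟨add_pos (mem_Ioi.1 hw.1) (mem_Ioi.1 hz.1), add_pos (mem_Ioi.1 hw.2) (mem_Ioi.1 hz.2)⟩
  have hweights : A / (A + C) + C / (A + C) = 1 := by field_simp
  have h₁ := add_rpow_le_of_add_eq_one hp.le hw.1 hz.1 (div_pos hA hS) (div_pos hC hS) hweights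
  have h₂ := add_rpow_le_of_add_eq_one hp.le hw.2 hz.2 (div_pos hA hS) (div_pos hC hS) hweights
  have hshare {X : ℝ} (hX : 0 < X) : (X / (A + C)) ^ (1 - p) * X ^ p = X / (A + C) ^ (1 - p) := by
    rw [div_rpow hX.le hS.le, div_mul_eq_mul_div, ← rpow_add hX, sub_add_cancel, rpow_one]
  have hsum : (w + z).1 ^ p + (w + z).2 ^ p ≤ (A + C) ^ p :=
    calc (w + z).1 ^ p + (w + z).2 ^ p
        ≤ (A / (A + C)) ^ (1 - p) * A ^ p + (C / (A + C)) ^ (1 - p) * C ^ p := by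
          rw [lpNormPair_rpow hp.ne hw, lpNormPair_rpow hp.ne hz]
          simp only [Prod.fst_add, Prod.snd_add]
          linarith
      _ = (A + C) ^ p := by
          rw [hshare hA, hshare hC, ← add_div, rpow_sub hS, rpow_one, div_div_cancel₀ hS.ne']
  calc A + C = ((A + C) ^ p) ^ p⁻¹ := (rpow_rpow_inv hS.le hp.ne).symm
    _ ≤ lpNormPair p (w + z) :=
      rpow_le_rpow_of_nonpos (rpow_add_rpow_pos hwz) hsum (inv_nonpos.2 hp.le)

theorem concaveOn_lpNormPair (hp : p < 0) : ConcaveOn ℝ (Ioi 0 ×ˢ Ioi 0) (lpNormPair p) := by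
  refine concaveOn_iff_forall_pos.2 ⟨(convex_Ioi 0).prod (convex_Ioi 0),
    fun w hw z hz a b ha hb _ => ?_⟩
  rw [smul_eq_mul, smul_eq_mul, ← lpNormPair_smul hp.ne ha hw, ← lpNormPair_smul hp.ne hb hz]
  exact add_le_lpNormPair_add hp ⟨mul_pos ha hw.1, mul_pos ha hw.2⟩
    ⟨mul_pos hb hz.1, mul_pos hb hz.2⟩

end lpNormPair

theorem sum_preserves_alpha_concavity_general
    (N : ℕ) (D : Set (EuclideanSpace ℝ (Fin N)))
    (f g : EuclideanSpace ℝ (Fin N) → ℝ)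
    (hf_pos : ∀ x ∈ D, 0 < f x) (hg_pos : ∀ x ∈ D, 0 < g x)
    (α : ℝ) (hα : α ∈ Set.Ioo (-1 : ℝ) 0)
    (hf_conc : ConcaveOn ℝ D (fun x => f x ^ α))
    (hg_conc : ConcaveOn ℝ D (fun x => g x ^ α)) :
    ConcaveOn ℝ D (fun x => (f x + g x) ^ α) := by
  have hp : α⁻¹ < 0 := inv_lt_zero.2 hα.2
  have hmaps : MapsTo (fun x => (f x ^ α, g x ^ α)) D (Ioi 0 ×ˢ Ioi 0) := fun x hx =>
    ⟨rpow_pos_of_pos (hf_pos x hx) α, rpow_pos_of_pos (hg_pos x hx) α⟩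
  refine ((concaveOn_lpNormPair hp).comp_of_mapsTo (hf_conc.prodMk hg_conc)
    (monotoneOn_lpNormPair hp.le) hmaps).congr fun x hx => ?_
  simp only [Function.comp_apply, lpNormPair, inv_inv,
    rpow_rpow_inv (hf_pos x hx).le hα.2.ne, rpow_rpow_inv (hg_pos x hx).le hα.2.ne]

theorem sum_preserves_alpha_concavity
    (N : ℕ) (D : Set (EuclideanSpace ℝ (Fin N)))
    (hD_conv : Convex ℝ D) (hD_open : IsOpen D)
    (f g : EuclideanSpace ℝ (Fin N) → ℝ)
    (hf_pos : ∀ x ∈ D, 0 < f x) (hg_pos : ∀ x ∈ D, 0 < g x)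
    (hf_smooth : ContDiffOn ℝ 2 f D) (hg_smooth : ContDiffOn ℝ 2 g D)
    (α : ℝ) (hα : α ∈ Set.Ioo (-1 : ℝ) 0)
    (hf_conc : ConcaveOn ℝ D (fun x => f x ^ α))
    (hg_conc : ConcaveOn ℝ D (fun x => g x ^ α)) :
    ConcaveOn ℝ D (fun x => (f x + g x) ^ α) :=
  sum_preserves_alpha_concavity_general N D f g hf_pos hg_pos α hα hf_conc hg_conc
end
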